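/- arXiv:2604.02311 — 2 statements merged into one kernel-verified Lean document; each statement's English description precedes it below -/
import Mathlib

section
/- Let p be a prime with 2^(n-1) ≤ p < 2^n for some n ≥ 2, and let x be an integer with 1 ≤ x < p. Run the Extended Euclidean Algorithm on (p, x) and let N = 4·Σ_{i=1}^{k-1}(⌊log₂ q_i⌋ + 1). Then N ≥ 4n. -/
/-!
Each division step satisfies `r (i-1) < (q i + 1) * r i ≤ 2 ^ (⌊log₂ q i⌋ + 1) * r i`. Chaining these
from `r 0 = p` down to `r (k-1) = gcd p x = 1` gives `2 ^ (n-1) ≤ p < 2 ^ (N / 4)`, hence `n ≤ N / 4`.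
-/

/-- Remainder sequence of the Extended Euclidean Algorithm on `(p, x)`:
`r 0 = p`, `r 1 = x`, and `r (i+1) = r (i-1) - ⌊r (i-1) / r i⌋ * r i` for `i ≥ 1`. -/
def eeaR (p x : ℕ) : ℕ → ℕ
  | 0 => p
  | 1 => x
  | (i + 2) => eeaR p x i - (eeaR p x i / eeaR p x (i + 1)) * eeaR p x (i + 1)

/-- Quotient sequence `q i = ⌊r (i-1) / r i⌋` of the Extended Euclidean Algorithm. -/
def eeaQ (p x i : ℕ) : ℕ := eeaR p x (i - 1) / eeaR p x i

/-- Cofactor sequence of the Extended Euclidean Algorithm: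
`t 0 = 0`, `t 1 = 1`, and `t (i+1) = t (i-1) + q i * t i` for `i ≥ 1`. -/
def eeaT (p x : ℕ) : ℕ → ℕ
  | 0 => 0
  | 1 => 1
  | (i + 2) => eeaT p x i + eeaQ p x (i + 1) * eeaT p x (i + 1)

section

variable {p x : ℕ}

lemma eeaR_add_two (p x i : ℕ) : eeaR p x (i + 2) = eeaR p x i % eeaR p x (i + 1) := by
  rw [eeaR, Nat.mod_eq_sub_div_mul]

lemma gcd_eeaR_succ_eeaR (p x i : ℕ) : Nat.gcd (eeaR p x (i + 1)) (eeaR p x i) = Nat.gcd x p := by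
  induction i with
  | zero => rfl
  | succ i ih => rw [eeaR_add_two, ← Nat.gcd_rec, ih]

lemma eeaR_eq_gcd_of_eeaR_succ_eq_zero {k : ℕ} (hk : eeaR p x (k + 1) = 0) :
    eeaR p x k = Nat.gcd x p := by
  rw [← gcd_eeaR_succ_eeaR p x k, hk, Nat.gcd_zero_left]

lemma eeaR_lt_two_pow_mul {i : ℕ} (h : 0 < eeaR p x (i + 1)) :
    eeaR p x i < 2 ^ (Nat.log 2 (eeaQ p x (i + 1)) + 1) * eeaR p x (i + 1) :=
  calc eeaR p x i < (eeaQ p x (i + 1) + 1) * eeaR p x (i + 1) := by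
        rw [add_mul, one_mul]; exact Nat.lt_div_mul_add h
    _ ≤ 2 ^ (Nat.log 2 (eeaQ p x (i + 1)) + 1) * eeaR p x (i + 1) :=
        Nat.mul_le_mul_right _ (Nat.lt_pow_succ_log_self one_lt_two _)

lemma eeaR_zero_lt_two_pow_sum_mul {m : ℕ} (hm : 1 ≤ m)
    (hpos : ∀ i ∈ Finset.Icc 1 m, 0 < eeaR p x i) :
    eeaR p x 0 < 2 ^ (∑ i ∈ Finset.Icc 1 m, (Nat.log 2 (eeaQ p x i) + 1)) * eeaR p x m := by
  induction m, hm using Nat.le_induction with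
  | base => simpa using eeaR_lt_two_pow_mul (hpos 1 (by simp))
  | succ m hm ih =>
    have hstep := eeaR_lt_two_pow_mul (hpos (m + 1) (by simp))
    calc eeaR p x 0
        < 2 ^ (∑ i ∈ Finset.Icc 1 m, (Nat.log 2 (eeaQ p x i) + 1)) * eeaR p x m :=
          ih fun i hi => hpos i (Finset.Icc_subset_Icc_right m.le_succ hi)
      _ ≤ 2 ^ (∑ i ∈ Finset.Icc 1 m, (Nat.log 2 (eeaQ p x i) + 1)) *
            (2 ^ (Nat.log 2 (eeaQ p x (m + 1)) + 1) * eeaR p x (m + 1)) :=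
          Nat.mul_le_mul_left _ hstep.le
      _ = 2 ^ (∑ i ∈ Finset.Icc 1 (m + 1), (Nat.log 2 (eeaQ p x i) + 1)) * eeaR p x (m + 1) := by
          rw [Finset.sum_Icc_succ_top (by omega)]; ring

end

theorem stmt_1_general (n p x : ℕ) (hp : p.Prime)
    (hplb : 2 ^ (n - 1) ≤ p)
    (hx : 1 ≤ x) (hxp : x < p)
    (k : ℕ) (hk : eeaR p x k = 0) (hkmin : ∀ m < k, eeaR p x m ≠ 0)
    (N : ℕ) (hN : N = 4 * ∑ i ∈ Finset.Icc 1 (k - 1), (Nat.log 2 (eeaQ p x i) + 1)) :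
    4 * n ≤ N := by
  obtain ⟨m, rfl⟩ : ∃ m, k = m + 2 := by
    match k, hk with
    | 0, hk => exact absurd hk hp.ne_zero
    | 1, hk => exact absurd hk (Nat.pos_iff_ne_zero.mp hx)
    | m + 2, _ => exact ⟨m, rfl⟩
  have hcop : Nat.gcd x p = 1 :=
    Nat.coprime_comm.mp ((hp.coprime_iff_not_dvd).mpr (Nat.not_dvd_of_pos_of_lt hx hxp))
  have hlast : eeaR p x (m + 1) = 1 := by
    rw [eeaR_eq_gcd_of_eeaR_succ_eq_zero hk, hcop]
  have hbound := eeaR_zero_lt_two_pow_sum_mul (p := p) (x := x) (m := m + 1) (by omega)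
    fun i hi => Nat.pos_of_ne_zero (hkmin i (Nat.lt_succ_of_le (Finset.mem_Icc.mp hi).2))
  rw [hlast, mul_one] at hbound
  have hsum : n - 1 < ∑ i ∈ Finset.Icc 1 (m + 1), (Nat.log 2 (eeaQ p x i) + 1) :=
    (Nat.pow_lt_pow_iff_right one_lt_two).mp (hplb.trans_lt hbound)
  rw [show m + 2 - 1 = m + 1 from rfl] at hN
  omega

/-- For a prime `p` with `2^(n-1) ≤ p < 2^n` (`n ≥ 2`) and `1 ≤ x < p`,
the step count `N = 4·Σ_{i=1}^{k-1}(⌊log₂ q_i⌋ + 1)` satisfies `N ≥ 4n`. -/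
theorem stmt_1 (n p x : ℕ) (hn : 2 ≤ n) (hp : p.Prime)
    (hplb : 2 ^ (n - 1) ≤ p) (hpub : p < 2 ^ n)
    (hx : 1 ≤ x) (hxp : x < p)
    (k : ℕ) (hk : eeaR p x k = 0) (hkmin : ∀ m < k, eeaR p x m ≠ 0)
    (N : ℕ) (hN : N = 4 * ∑ i ∈ Finset.Icc 1 (k - 1), (Nat.log 2 (eeaQ p x i) + 1)) :
    4 * n ≤ N :=
  stmt_1_general n p x hp hplb hx hxp k hk hkmin N hN
end

section
/- Let p be a prime and x an integer with 1 ≤ x < p, and run the Extended Euclidean Algorithm on (p, x) with termination index k. Then for every j with 1 ≤ j ≤ k−1, p < 2^(Σ_{i=1}^{j}(⌊log₂ q_i⌋ + 1)) · r_j. -/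
open Finset

theorem Nat.lt_two_pow_succ_log_div_mul {a b : ℕ} (hb : 0 < b) :
    a < 2 ^ (Nat.log 2 (a / b) + 1) * b :=
  calc a < (a / b + 1) * b := by rw [Nat.add_one_mul]; exact Nat.lt_div_mul_add hb
    _ ≤ 2 ^ (Nat.log 2 (a / b) + 1) * b :=
      Nat.mul_le_mul_right b (Nat.lt_pow_succ_log_self one_lt_two _)

theorem eeaR_lt_two_pow_mul_eeaR_succ (p x i : ℕ) (hi : 0 < eeaR p x (i + 1)) :
    eeaR p x i < 2 ^ (Nat.log 2 (eeaQ p x (i + 1)) + 1) * eeaR p x (i + 1) :=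
  Nat.lt_two_pow_succ_log_div_mul hi

theorem eeaR_zero_lt_two_pow_sum_mul_eeaR (p x j : ℕ) (hj : 1 ≤ j)
    (hpos : ∀ i, 1 ≤ i → i ≤ j → 0 < eeaR p x i) :
    p < 2 ^ (∑ i ∈ Icc 1 j, (Nat.log 2 (eeaQ p x i) + 1)) * eeaR p x j := by
  induction j, hj using Nat.le_induction with
  | base =>
    rw [Icc_self, sum_singleton]
    exact eeaR_lt_two_pow_mul_eeaR_succ p x 0 (hpos 1 le_rfl le_rfl)
  | succ n hn ih =>
    calc p < 2 ^ (∑ i ∈ Icc 1 n, (Nat.log 2 (eeaQ p x i) + 1)) * eeaR p x n :=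
          ih fun i hi hin => hpos i hi (by omega)
      _ ≤ 2 ^ (∑ i ∈ Icc 1 n, (Nat.log 2 (eeaQ p x i) + 1)) *
            (2 ^ (Nat.log 2 (eeaQ p x (n + 1)) + 1) * eeaR p x (n + 1)) :=
          Nat.mul_le_mul_left _
            (eeaR_lt_two_pow_mul_eeaR_succ p x n (hpos (n + 1) (by omega) le_rfl)).le
      _ = 2 ^ (∑ i ∈ Icc 1 (n + 1), (Nat.log 2 (eeaQ p x i) + 1)) * eeaR p x (n + 1) := by
          rw [sum_Icc_succ_top (by omega)]; ring

theorem stmt_10_general (p x : ℕ)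
    (k : ℕ) (hkmin : ∀ m < k, eeaR p x m ≠ 0) :
    ∀ j, 1 ≤ j → j ≤ k - 1 →
      p < 2 ^ (∑ i ∈ Finset.Icc 1 j, (Nat.log 2 (eeaQ p x i) + 1)) * eeaR p x j :=
  fun j hj hjk => eeaR_zero_lt_two_pow_sum_mul_eeaR p x j hj fun i _ hij =>
    Nat.pos_of_ne_zero (hkmin i (by omega))

/-- For a prime `p` and `1 ≤ x < p`, with termination index `k`:
for every `1 ≤ j ≤ k−1`, `p < 2^(Σ_{i=1}^{j}(⌊log₂ q_i⌋ + 1)) · r_j`. -/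
theorem stmt_10 (p x : ℕ) (hp : p.Prime) (hx : 1 ≤ x) (hxp : x < p)
    (k : ℕ) (hk : eeaR p x k = 0) (hkmin : ∀ m < k, eeaR p x m ≠ 0) :
    ∀ j, 1 ≤ j → j ≤ k - 1 →
      p < 2 ^ (∑ i ∈ Finset.Icc 1 j, (Nat.log 2 (eeaQ p x i) + 1)) * eeaR p x j :=
  stmt_10_general p x k hkmin
end
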